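/- Let 1 < p < ∞, let Ω ⊂ ℝ^N be open and bounded, let v : ℝ^{M×N} → ℝ be continuous with p-growth and with L^p→L¹ uniformly continuous Nemytskii operator on bounded sets (‖v∘U − v∘W‖_{L¹} ≤ γ(‖U−W‖_{L^p})(1+‖U‖_{L^p}^p+‖W‖_{L^p}^p) with γ continuous, γ(0)=0). Let u ∈ W^{1,p}(Ω;ℝ^M) and let (w_n) ⊂ W^{1,p}(Ω;ℝ^M) be bounded with |{∇w_n ≠ 0}| → 0. Then ∫_Ω [v(∇w_n + ∇u) − v(∇u)] dx − ∫_Ω [v(∇w_n + z_n) − v(z_n)] dx = 0 for z_n := χ_{{∇w_n ≠ 0}}∇u, and z_n → 0 in L^p; consequently liminf_n ∫_Ω v(∇w_n+∇u)φ dx − ∫_Ω v(∇u)φ dx = liminf_n ∫_Ω v(∇w_n)φ dx − ∫_Ω v(0)φ dx + o(1) for φ ∈ C(Ω̄). -/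

import Mathlib

open MeasureTheory Metric Filter
open scoped ENNReal Topology

noncomputable section

abbrev EN (N : ℕ) : Type := EuclideanSpace ℝ (Fin N)
abbrev Mat (M N : ℕ) : Type := Matrix (Fin M) (Fin N) ℝ

/-- Frobenius norm on real `M × N` matrices. -/
def fnorm {M N : ℕ} (s : Mat M N) : ℝ := Real.sqrt (∑ i, ∑ j, (s i j) ^ 2)

/-- The matrix of partial derivatives (gradient) of `φ : ℝ^N → ℝ^M` at `x`,
computed via the Fréchet derivative (junk value `0` where `φ` is not differentiable). -/
def grad {M N : ℕ} (φ : EN N → EN M) (x : EN N) : Mat M N :=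
  Matrix.of fun i j => fderiv ℝ φ x (EuclideanSpace.single j 1) i

/-! Off `{∇w_n ≠ 0}` the integrand `v (∇w_n + ∇u) - v (∇u)` vanishes, so `∇u` may be replaced by
`z_n = χ_{∇w_n ≠ 0} ∇u`, and `z_n → 0` in `L^p` by absolute continuity of the integral. Writing
`v (∇w_n + z_n) - v z_n = (v ∇w_n - v 0) + (v (∇w_n + z_n) - v ∇w_n) - (v z_n - v 0)`, the
Nemytskii modulus bounds the `L¹` norms of the last two terms by `γ ‖z_n‖_p` times a constant that
depends only on the `L^p` bounds, so the two liminfs differ by `o(1)`. -/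

section

variable {α E : Type*} [MeasurableSpace α] {μ : Measure α} [NormedAddCommGroup E]

theorem toReal_eLpNorm_le_add_toReal_eLpNorm_sub {p : ℝ≥0∞} (hp : 1 ≤ p) {f g : α → E}
    (hf : AEStronglyMeasurable f μ) (hg : AEStronglyMeasurable g μ)
    (hfg : eLpNorm (f - g) p μ ≠ ∞) :
    (eLpNorm f p μ).toReal ≤ (eLpNorm g p μ).toReal + (eLpNorm (f - g) p μ).toReal := by
  refine ENNReal.toReal_le_add' ?_ (fun hg_top => ?_) (absurd · hfg)
  · simpa using eLpNorm_add_le hg (hf.sub hg) hp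
  · by_contra hf_top
    have : eLpNorm (f - (f - g)) p μ < ∞ :=
      (eLpNorm_sub_le hf (hf.sub hg) hp).trans_lt
        (ENNReal.add_lt_top.2 ⟨lt_top_iff_ne_top.2 hf_top, lt_top_iff_ne_top.2 hfg⟩)
    simp [hg_top] at this

theorem MeasureTheory.MemLp.tendsto_eLpNorm_indicator {p : ℝ≥0∞} (hp_one : 1 ≤ p)
    (hp_top : p ≠ ∞) {f : α → E} (hf : MemLp f p μ) {ι : Type*} {l : Filter ι} {s : ι → Set α}
    (hs : ∀ i, MeasurableSet (s i)) (hμs : Tendsto (fun i => μ (s i)) l (𝓝 0)) :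
    Tendsto (fun i => eLpNorm ((s i).indicator f) p μ) l (𝓝 0) := by
  refine ENNReal.tendsto_nhds_zero.2 fun ε hε => ?_
  obtain ⟨η, -, hη, hηε⟩ := ENNReal.lt_iff_exists_real_btwn.1 hε
  obtain ⟨δ, hδ, hδη⟩ := hf.eLpNorm_indicator_le hp_one hp_top (ENNReal.ofReal_pos.1 hη)
  filter_upwards [hμs.eventually_lt_const (ENNReal.ofReal_pos.2 hδ)] with i hi
  exact (hδη _ (hs i) hi.le).trans hηε.le

theorem integrable_of_forall_integral_norm_truncation_le [IsFiniteMeasure μ] {g : α → ℝ}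
    (hg : StronglyMeasurable g) {D : ℝ}
    (hD : ∀ j : ℕ, ∫ x, ‖{x | |g x| ≤ j}.indicator g x‖ ∂μ ≤ D) :
    Integrable g μ := by
  have hmeas : ∀ j : ℕ, MeasurableSet {x | |g x| ≤ j} := fun j =>
    measurableSet_le hg.measurable.abs measurable_const
  have htrunc_le : ∀ j : ℕ, eLpNorm ({x | |g x| ≤ j}.indicator g) 1 μ ≤ ENNReal.ofReal D := by
    intro j
    have hint : Integrable ({x | |g x| ≤ j}.indicator g) μ := by
      refine Integrable.of_bound (hg.aestronglyMeasurable.indicator (hmeas j)) j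
        (ae_of_all _ fun x => ?_)
      by_cases hx : |g x| ≤ j <;> simp [Set.indicator, hx]
    rw [eLpNorm_one_eq_lintegral_enorm, ← ofReal_integral_norm_eq_lintegral_enorm hint]
    exact ENNReal.ofReal_le_ofReal (hD j)
  have hlim : ∀ x, Tendsto (fun j : ℕ => {x | |g x| ≤ j}.indicator g x) atTop (𝓝 (g x)) :=
    fun x => tendsto_const_nhds.congr' <| (eventually_ge_atTop ⌈|g x|⌉₊).mono fun j hj =>
      (Set.indicator_of_mem (show x ∈ {x | |g x| ≤ j} from Nat.ceil_le.1 hj) g).symm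
  refine memLp_one_iff_integrable.1 ⟨hg.aestronglyMeasurable, ?_⟩
  calc eLpNorm g 1 μ
      ≤ liminf (fun j : ℕ => eLpNorm ({x | |g x| ≤ j}.indicator g) 1 μ) atTop :=
        Lp.eLpNorm_lim_le_liminf_eLpNorm
          (fun j => hg.aestronglyMeasurable.indicator (hmeas j)) g (ae_of_all _ hlim)
    _ ≤ ENNReal.ofReal D := liminf_le_of_frequently_le' (Frequently.of_forall htrunc_le)
    _ < ∞ := ENNReal.ofReal_lt_top

theorem norm_integral_sub_integral_le_of_integrable_sub [NormedSpace ℝ E] {f g : α → E}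
    (hfg : Integrable (f - g) μ) :
    ‖∫ x, f x ∂μ - ∫ x, g x ∂μ‖ ≤ ∫ x, ‖f x - g x‖ ∂μ := by
  by_cases hf : Integrable f μ
  · have hg : Integrable g μ := by simpa using hf.sub hfg
    rw [← integral_sub hf hg]
    exact norm_integral_le_integral_norm _
  · have hg : ¬Integrable g μ := fun hg => hf (by simpa using hfg.add hg)
    simpa [integral_undef hf, integral_undef hg] using integral_nonneg fun x => norm_nonneg _

end

theorem Real.sSup_eq_sSup_of_forall_sub_mem {s t : Set ℝ}
    (hst : ∀ ε > 0, ∀ a ∈ s, a - ε ∈ t) (hts : ∀ ε > 0, ∀ a ∈ t, a - ε ∈ s) :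
    sSup s = sSup t := by
  rcases s.eq_empty_or_nonempty with rfl | hs
  · rw [Set.eq_empty_of_forall_notMem fun a ha => hts 1 one_pos a ha]
  have ht : t.Nonempty := hs.elim fun a ha => ⟨a - 1, hst 1 one_pos a ha⟩
  have hbdd : BddAbove s ↔ BddAbove t := by
    constructor <;> rintro ⟨b, hb⟩ <;> refine ⟨b + 1, fun a ha => ?_⟩
    · linarith [hb (hts 1 one_pos a ha)]
    · linarith [hb (hst 1 one_pos a ha)]
  by_cases hs_bdd : BddAbove s
  · have ht_bdd := hbdd.1 hs_bdd
    apply le_antisymm <;> refine le_of_forall_pos_le_add fun ε hε => csSup_le ?_ fun a ha => ?_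
    · exact hs
    · linarith [le_csSup ht_bdd (hst ε hε a ha)]
    · exact ht
    · linarith [le_csSup hs_bdd (hts ε hε a ha)]
  · rw [Real.sSup_of_not_bddAbove hs_bdd, Real.sSup_of_not_bddAbove (hbdd.not.1 hs_bdd)]

theorem liminf_add_of_tendsto_zero {ι : Type*} {l : Filter ι} {b d : ι → ℝ}
    (hd : Tendsto d l (𝓝 0)) : liminf (fun i => b i + d i) l = liminf b l := by
  have hsmall : ∀ ε > 0, ∀ᶠ i in l, |d i| < ε := fun ε hε => by
    simpa using Metric.tendsto_nhds.1 hd ε hε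
  simp only [liminf_eq]
  apply Real.sSup_eq_sSup_of_forall_sub_mem <;> intro ε hε a ha <;>
    filter_upwards [ha, hsmall ε hε] with i hi hdi <;> linarith [abs_lt.1 hdi]

theorem apply_add_sub_apply_eq_indicator_support {α E β : Type*} [AddZeroClass E]
    [AddGroup β] (v : E → β) (f g : α → E) (x : α) :
    v (f x + g x) - v (g x) =
      v (f x + {y | f y ≠ 0}.indicator g x) - v ({y | f y ≠ 0}.indicator g x) := by
  by_cases hx : f x = 0 <;> simp [hx]

section Nemytskii

variable {α E : Type*} [MeasurableSpace α] [NormedAddCommGroup E]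

def HasNemytskiiModulus (μ : Measure α) (p : ℝ) (v : E → ℝ) (γ : ℝ → ℝ) : Prop :=
  ∀ U W : α → E, AEStronglyMeasurable U μ → AEStronglyMeasurable W μ →
    (eLpNorm (fun x => v (U x) - v (W x)) 1 μ).toReal ≤
      γ (eLpNorm (U - W) (ENNReal.ofReal p) μ).toReal *
        (1 + (eLpNorm U (ENNReal.ofReal p) μ).toReal ^ p
          + (eLpNorm W (ENNReal.ofReal p) μ).toReal ^ p)

namespace HasNemytskiiModulus

variable {μ : Measure α} {p : ℝ} {v : E → ℝ} {γ : ℝ → ℝ}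

theorem integral_norm_sub_le (hN : HasNemytskiiModulus μ p v γ) (hp : 0 ≤ p)
    (hv : Continuous v) {U W : α → E} (hU : AEStronglyMeasurable U μ)
    (hW : AEStronglyMeasurable W μ) {R : ℝ} (hUR : (eLpNorm U (ENNReal.ofReal p) μ).toReal ≤ R)
    (hWR : (eLpNorm W (ENNReal.ofReal p) μ).toReal ≤ R) :
    ∫ x, ‖v (U x) - v (W x)‖ ∂μ ≤
      |γ (eLpNorm (U - W) (ENNReal.ofReal p) μ).toReal| * (1 + R ^ p + R ^ p) := by
  have hvUW : AEStronglyMeasurable (fun x => v (U x) - v (W x)) μ :=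
    (hv.comp_aestronglyMeasurable hU).sub (hv.comp_aestronglyMeasurable hW)
  rw [integral_norm_eq_lintegral_enorm hvUW, ← eLpNorm_one_eq_lintegral_enorm]
  refine (hN U W hU hW).trans ?_
  refine (mul_le_mul_of_nonneg_right (le_abs_self _) (by positivity)).trans ?_
  gcongr

/-- The modulus only controls `toReal` of an `L¹` norm, which is `0` when the norm is infinite.
It is applied instead to the truncations `v ∘ X' - v ∘ Y`, `X' = X` where `|v ∘ X - v ∘ Y| ≤ j` and
`X' = Y` elsewhere: these are integrable and `‖X' - Y‖_p ≤ ‖X - Y‖_p`, so their `L¹` norms are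
bounded uniformly in `j`. -/
theorem integrable_sub [IsFiniteMeasure μ] (hN : HasNemytskiiModulus μ p v γ) (hp : 1 ≤ p)
    (hv : Continuous v) (hγ : Continuous γ) {X Y : α → E} (hX : StronglyMeasurable X)
    (hY : StronglyMeasurable Y) (hXY : eLpNorm (X - Y) (ENNReal.ofReal p) μ ≠ ∞) :
    Integrable (fun x => v (X x) - v (Y x)) μ := by
  set T := (eLpNorm (X - Y) (ENNReal.ofReal p) μ).toReal
  set R := (eLpNorm Y (ENNReal.ofReal p) μ).toReal + T
  obtain ⟨Γ, hΓ⟩ := (isCompact_Icc (a := 0) (b := T)).exists_bound_of_continuousOn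
    hγ.continuousOn
  have hg : StronglyMeasurable fun x => v (X x) - v (Y x) :=
    (hv.comp_stronglyMeasurable hX).sub (hv.comp_stronglyMeasurable hY)
  refine integrable_of_forall_integral_norm_truncation_le hg (D := Γ * (1 + R ^ p + R ^ p))
    fun j => ?_
  set s := {x | |v (X x) - v (Y x)| ≤ j}
  have hs : MeasurableSet s := measurableSet_le hg.measurable.abs measurable_const
  set X' := s.piecewise X Y
  have hX' : StronglyMeasurable X' := hX.piecewise hs hY
  have htrunc : s.indicator (fun x => v (X x) - v (Y x)) = fun x => v (X' x) - v (Y x) := by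
    ext x
    by_cases hx : x ∈ s <;> simp [X', hx]
  have hX'Y : eLpNorm (X' - Y) (ENNReal.ofReal p) μ ≤ eLpNorm (X - Y) (ENNReal.ofReal p) μ := by
    have : X' - Y = s.indicator (X - Y) := by
      ext x
      by_cases hx : x ∈ s <;> simp [X', hx]
    exact this ▸ eLpNorm_indicator_le _
  have hX'R : (eLpNorm X' (ENNReal.ofReal p) μ).toReal ≤ R :=
    (toReal_eLpNorm_le_add_toReal_eLpNorm_sub (ENNReal.one_le_ofReal.2 hp)
      hX'.aestronglyMeasurable hY.aestronglyMeasurable (ne_top_of_le_ne_top hXY hX'Y)).trans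
      (add_le_add_right (ENNReal.toReal_mono hXY hX'Y) _)
  rw [htrunc]
  refine (hN.integral_norm_sub_le (by linarith) hv hX'.aestronglyMeasurable
    hY.aestronglyMeasurable hX'R (le_add_of_nonneg_right ENNReal.toReal_nonneg)).trans ?_
  refine mul_le_mul_of_nonneg_right ?_ (by positivity)
  simpa using hΓ _ ⟨ENNReal.toReal_nonneg, ENNReal.toReal_mono hXY hX'Y⟩

theorem norm_integral_sub_integral_le [IsFiniteMeasure μ] (hN : HasNemytskiiModulus μ p v γ)
    (hp : 1 ≤ p) (hv : Continuous v) (hγ : Continuous γ) {φ : α → ℝ}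
    (hφ : AEStronglyMeasurable φ μ) {K : ℝ} (hφK : ∀ᵐ x ∂μ, ‖φ x‖ ≤ K) {G z : α → E}
    (hG : StronglyMeasurable G) (hz : StronglyMeasurable z) {B : ℝ}
    (hGB : (eLpNorm G (ENNReal.ofReal p) μ).toReal ≤ B) (hz1 : eLpNorm z (ENNReal.ofReal p) μ ≤ 1) :
    ‖∫ x, (v (G x + z x) - v (z x)) * φ x ∂μ - ∫ x, (v (G x) - v 0) * φ x ∂μ‖ ≤
      2 * |γ (eLpNorm z (ENNReal.ofReal p) μ).toReal| * (1 + (B + 1) ^ p + (B + 1) ^ p) * |K| := by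
  set t := (eLpNorm z (ENNReal.ofReal p) μ).toReal
  set D := 1 + (B + 1) ^ p + (B + 1) ^ p
  have hB : 0 ≤ B := ENNReal.toReal_nonneg.trans hGB
  have hz_fin : eLpNorm z (ENNReal.ofReal p) μ ≠ ∞ := ne_top_of_le_ne_top ENNReal.one_ne_top hz1
  have ht1 : t ≤ 1 := by simpa using ENNReal.toReal_mono ENNReal.one_ne_top hz1
  have hGz : G + z - G = z := add_sub_cancel_left _ _
  have hGzB : (eLpNorm (G + z) (ENNReal.ofReal p) μ).toReal ≤ B + 1 := by
    refine (toReal_eLpNorm_le_add_toReal_eLpNorm_sub (ENNReal.one_le_ofReal.2 hp)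
      (hG.add hz).aestronglyMeasurable hG.aestronglyMeasurable (by rwa [hGz])).trans ?_
    rw [hGz]
    exact add_le_add hGB ht1
  set P := fun x => v (G x + z x) - v (G x)
  set Q := fun x => v (z x) - v 0
  have hP : Integrable P μ :=
    hN.integrable_sub hp hv hγ (X := G + z) (hG.add hz) hG (by rwa [hGz])
  have hQ : Integrable Q μ :=
    hN.integrable_sub hp hv hγ (X := z) (Y := 0) hz stronglyMeasurable_const
      (by simpa using hz_fin)
  have hPD : ∫ x, ‖P x‖ ∂μ ≤ |γ t| * D := by
    simpa [hGz] using hN.integral_norm_sub_le (by linarith) hv (hG.add hz).aestronglyMeasurable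
      hG.aestronglyMeasurable hGzB (by linarith)
  have hQD : ∫ x, ‖Q x‖ ∂μ ≤ |γ t| * D := by
    simpa using hN.integral_norm_sub_le (U := z) (W := 0) (by linarith) hv
      hz.aestronglyMeasurable aestronglyMeasurable_const (by linarith) (by simp; linarith)
  have hdiff : ∀ x, (v (G x + z x) - v (z x)) * φ x - (v (G x) - v 0) * φ x
      = (P x - Q x) * φ x := fun x => by ring
  calc ‖∫ x, (v (G x + z x) - v (z x)) * φ x ∂μ - ∫ x, (v (G x) - v 0) * φ x ∂μ‖
      ≤ ∫ x, ‖(P x - Q x) * φ x‖ ∂μ := by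
        simpa only [hdiff] using norm_integral_sub_integral_le_of_integrable_sub
          (((hP.sub hQ).mul_bdd hφ hφK).congr (ae_of_all _ fun x => (hdiff x).symm))
    _ ≤ ∫ x, (‖P x‖ + ‖Q x‖) * K ∂μ := by
        refine integral_mono_ae ((hP.sub hQ).mul_bdd hφ hφK).norm
          ((hP.norm.add hQ.norm).mul_const K) ?_
        filter_upwards [hφK] with x hx
        rw [norm_mul]
        exact mul_le_mul (norm_sub_le _ _) hx (norm_nonneg _) (by positivity)
    _ = (∫ x, ‖P x‖ ∂μ + ∫ x, ‖Q x‖ ∂μ) * K := by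
        rw [integral_mul_const, integral_add hP.norm hQ.norm]
    _ ≤ (∫ x, ‖P x‖ ∂μ + ∫ x, ‖Q x‖ ∂μ) * |K| :=
        mul_le_mul_of_nonneg_left (le_abs_self K) (by positivity)
    _ ≤ 2 * |γ t| * D * |K| := by
        nlinarith [abs_nonneg K]

theorem tendsto_integral_sub_integral [IsFiniteMeasure μ] (hN : HasNemytskiiModulus μ p v γ)
    (hp : 1 ≤ p) (hv : Continuous v) (hγ : Continuous γ) (hγ0 : γ 0 = 0) {φ : α → ℝ}
    (hφ : AEStronglyMeasurable φ μ) {K : ℝ} (hφK : ∀ᵐ x ∂μ, ‖φ x‖ ≤ K)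
    {ι : Type*} {l : Filter ι} {G z : ι → α → E} (hG : ∀ i, StronglyMeasurable (G i))
    (hz : ∀ i, StronglyMeasurable (z i)) {B : ℝ}
    (hGB : ∀ i, (eLpNorm (G i) (ENNReal.ofReal p) μ).toReal ≤ B)
    (hz0 : Tendsto (fun i => eLpNorm (z i) (ENNReal.ofReal p) μ) l (𝓝 0)) :
    Tendsto (fun i => ∫ x, (v (G i x + z i x) - v (z i x)) * φ x ∂μ
      - ∫ x, (v (G i x) - v 0) * φ x ∂μ) l (𝓝 0) := by
  have ht : Tendsto (fun i => (eLpNorm (z i) (ENNReal.ofReal p) μ).toReal) l (𝓝 0) := by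
    simpa [Function.comp_def] using (ENNReal.tendsto_toReal ENNReal.zero_ne_top).comp hz0
  have hbound := (((hγ.tendsto 0).comp ht).abs.const_mul 2).mul_const
    (1 + (B + 1) ^ p + (B + 1) ^ p) |>.mul_const |K|
  rw [hγ0, abs_zero, mul_zero, zero_mul, zero_mul] at hbound
  refine squeeze_zero_norm' ?_ hbound
  filter_upwards [hz0.eventually_le_const zero_lt_one] with i hi
  exact hN.norm_integral_sub_integral_le hp hv hγ hφ hφK (hG i) (hz i) (hGB i) hi

theorem liminf_integral_add_eq [IsFiniteMeasure μ] (hN : HasNemytskiiModulus μ p v γ)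
    (hp : 1 ≤ p) (hv : Continuous v) (hγ : Continuous γ) (hγ0 : γ 0 = 0) {φ : α → ℝ}
    (hφ : AEStronglyMeasurable φ μ) {K : ℝ} (hφK : ∀ᵐ x ∂μ, ‖φ x‖ ≤ K) {G : ℕ → α → E}
    {g : α → E} (hG : ∀ n, StronglyMeasurable (G n)) (hg : StronglyMeasurable g)
    (hgp : MemLp g (ENNReal.ofReal p) μ) {B : ℝ}
    (hGB : ∀ n, (eLpNorm (G n) (ENNReal.ofReal p) μ).toReal ≤ B)
    (hGμ : Tendsto (fun n => μ {x | G n x ≠ 0}) atTop (𝓝 0)) :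
    liminf (fun n => ∫ x, (v (G n x + g x) - v (g x)) * φ x ∂μ) atTop =
      liminf (fun n => ∫ x, (v (G n x) - v 0) * φ x ∂μ) atTop := by
  have hA : ∀ n, MeasurableSet {x | G n x ≠ 0} := fun n =>
    ((hG n).measurableSet_eq_fun stronglyMeasurable_const).compl
  have hlim := hN.tendsto_integral_sub_integral hp hv hγ hγ0 hφ hφK hG
    (fun n => hg.indicator (hA n)) hGB
    (hgp.tendsto_eLpNorm_indicator (ENNReal.one_le_ofReal.2 hp) ENNReal.ofReal_ne_top hA hGμ)
  refine (congrArg (liminf · atTop) (funext fun n => ?_)).trans (liminf_add_of_tendsto_zero hlim)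
  rw [add_sub_cancel]
  exact integral_congr_ae (ae_of_all _ fun x =>
    congrArg (· * φ x) (apply_add_sub_apply_eq_indicator_support v (G n) g x))

end HasNemytskiiModulus

end Nemytskii

section Frobenius

attribute [local instance] Matrix.frobeniusNormedAddCommGroup

theorem fnorm_eq_norm {M N : ℕ} (s : Mat M N) : fnorm s = ‖s‖ := by
  rw [Matrix.frobenius_norm_def, fnorm, Real.sqrt_eq_rpow]
  simp [Real.norm_eq_abs, sq_abs]

end Frobenius

theorem stronglyMeasurable_grad {M N : ℕ} (φ : EN N → EN M) : StronglyMeasurable (grad φ) := by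
  have : Continuous fun T : EN N →L[ℝ] EN M =>
      (Matrix.of fun i j => T (EuclideanSpace.single j 1) i : Mat M N) := by
    fun_prop
  exact this.comp_stronglyMeasurable (measurable_fderiv ℝ φ).stronglyMeasurable

theorem measurableSet_grad_ne_zero {M N : ℕ} (φ : EN N → EN M) :
    MeasurableSet {x | grad φ x ≠ 0} :=
  have : TopologicalSpace.MetrizableSpace (Mat M N) :=
    inferInstanceAs (TopologicalSpace.MetrizableSpace (Fin M → Fin N → ℝ))
  ((stronglyMeasurable_grad φ).measurableSet_eq_fun stronglyMeasurable_const).compl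

open Bornology in
theorem stmt12_general {M N : ℕ} (p : ℝ) (hp : 1 < p)
    (Ω : Set (EN N)) (hΩo : IsOpen Ω) (hΩb : IsBounded Ω)
    (v : Mat M N → ℝ) (hv : Continuous v)
    (γ : ℝ → ℝ) (hγc : Continuous γ) (hγ0 : γ 0 = 0)
    (hNem : ∀ U W : EN N → Mat M N,
      AEStronglyMeasurable U (volume.restrict Ω) →
      AEStronglyMeasurable W (volume.restrict Ω) →
      (eLpNorm (fun x => v (U x) - v (W x)) 1 (volume.restrict Ω)).toReal ≤
        γ ((eLpNorm (fun x => fnorm (U x - W x)) (ENNReal.ofReal p)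
              (volume.restrict Ω)).toReal)
          * (1 + ((eLpNorm (fun x => fnorm (U x)) (ENNReal.ofReal p)
              (volume.restrict Ω)).toReal) ^ p
            + ((eLpNorm (fun x => fnorm (W x)) (ENNReal.ofReal p)
              (volume.restrict Ω)).toReal) ^ p))
    (u : EN N → EN M)
    (hugrad : MemLp (fun x => fnorm (grad u x)) (ENNReal.ofReal p) (volume.restrict Ω))
    (w : ℕ → EN N → EN M)
    (hwbd : ∃ B : ℝ, ∀ n,
      (eLpNorm (fun x => w n x) (ENNReal.ofReal p) (volume.restrict Ω)).toReal ≤ B ∧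
      (eLpNorm (fun x => fnorm (grad (w n) x)) (ENNReal.ofReal p)
        (volume.restrict Ω)).toReal ≤ B)
    (hsmall : Tendsto (fun n => volume {x ∈ Ω | grad (w n) x ≠ 0}) atTop (nhds 0))
    (z : ℕ → EN N → Mat M N)
    (hz : ∀ n x, z n x = Set.indicator {y | grad (w n) y ≠ 0} (fun y => grad u y) x) :
    (∀ n, ∫ x in Ω, (v (grad (w n) x + grad u x) - v (grad u x)) =
        ∫ x in Ω, (v (grad (w n) x + z n x) - v (z n x))) ∧
    Tendsto (fun n => eLpNorm (fun x => fnorm (z n x)) (ENNReal.ofReal p)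
        (volume.restrict Ω)) atTop (nhds 0) ∧
    ∀ φ : EN N → ℝ, ContinuousOn φ (closure Ω) →
      Filter.liminf (fun n => ∫ x in Ω,
          (v (grad (w n) x + grad u x) - v (grad u x)) * φ x) atTop =
        Filter.liminf (fun n => ∫ x in Ω, (v (grad (w n) x) - v 0) * φ x) atTop := by
  let _ := Matrix.frobeniusNormedAddCommGroup (m := Fin M) (n := Fin N) (α := ℝ)
  obtain ⟨B, hB⟩ := hwbd
  set μ := volume.restrict Ω
  have : IsFiniteMeasure μ := isFiniteMeasure_restrict.2 hΩb.measure_lt_top.ne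
  have hN : HasNemytskiiModulus μ p v γ := fun U W hU hW => by
    have := hNem U W hU hW
    simp only [fnorm_eq_norm, eLpNorm_norm] at this
    exact this
  have hgu : MemLp (grad u) (ENNReal.ofReal p) μ :=
    (memLp_norm_iff (stronglyMeasurable_grad u).aestronglyMeasurable).1
      (by simpa only [fnorm_eq_norm] using hugrad)
  have hμ : Tendsto (fun n => μ {x | grad (w n) x ≠ 0}) atTop (𝓝 0) := by
    convert hsmall using 2 with n
    rw [Measure.restrict_apply (measurableSet_grad_ne_zero (w n)), Set.inter_comm]
    rfl
  have hzA : ∀ n, z n = {x | grad (w n) x ≠ 0}.indicator (grad u) := fun n => funext (hz n)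
  refine ⟨fun n => integral_congr_ae (ae_of_all _ fun x => ?_), ?_, fun φ hφ => ?_⟩
  · rw [hzA n]
    exact apply_add_sub_apply_eq_indicator_support v (grad (w n)) (grad u) x
  · simpa only [fnorm_eq_norm, eLpNorm_norm, hzA] using
      hgu.tendsto_eLpNorm_indicator (ENNReal.one_le_ofReal.2 hp.le) ENNReal.ofReal_ne_top
        (fun n => measurableSet_grad_ne_zero (w n)) hμ
  obtain ⟨K, hK⟩ := hΩb.isCompact_closure.exists_bound_of_continuousOn hφ
  exact hN.liminf_integral_add_eq hp.le hv hγc hγ0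
    ((hφ.mono subset_closure).aestronglyMeasurable hΩo.measurableSet)
    ((ae_restrict_mem hΩo.measurableSet).mono fun x hx => hK x (subset_closure hx))
    (fun n => stronglyMeasurable_grad (w n)) (stronglyMeasurable_grad u) hgu
    (fun n => by simpa only [fnorm_eq_norm, eLpNorm_norm] using (hB n).2) hμ

open Bornology in
/-- reduction of lower semicontinuity along concentrating sequences to
zero background: with `z_n := χ_{{∇w_n ≠ 0}}∇u`, the integral differences agree,
`z_n → 0` in `L^p`, and the two liminfs coincide. -/
theorem stmt12 {M N : ℕ} (p : ℝ) (hp : 1 < p)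
    (Ω : Set (EN N)) (hΩo : IsOpen Ω) (hΩb : IsBounded Ω)
    (v : Mat M N → ℝ) (hv : Continuous v)
    (C : ℝ) (hgr : ∀ s, |v s| ≤ C * (1 + fnorm s ^ p))
    (γ : ℝ → ℝ) (hγc : Continuous γ) (hγ0 : γ 0 = 0)
    (hNem : ∀ U W : EN N → Mat M N,
      AEStronglyMeasurable U (volume.restrict Ω) →
      AEStronglyMeasurable W (volume.restrict Ω) →
      (eLpNorm (fun x => v (U x) - v (W x)) 1 (volume.restrict Ω)).toReal ≤
        γ ((eLpNorm (fun x => fnorm (U x - W x)) (ENNReal.ofReal p)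
              (volume.restrict Ω)).toReal)
          * (1 + ((eLpNorm (fun x => fnorm (U x)) (ENNReal.ofReal p)
              (volume.restrict Ω)).toReal) ^ p
            + ((eLpNorm (fun x => fnorm (W x)) (ENNReal.ofReal p)
              (volume.restrict Ω)).toReal) ^ p))
    (u : EN N → EN M) (hu : Differentiable ℝ u)
    (hugrad : MemLp (fun x => fnorm (grad u x)) (ENNReal.ofReal p) (volume.restrict Ω))
    (w : ℕ → EN N → EN M) (hw : ∀ n, Differentiable ℝ (w n))
    (hwbd : ∃ B : ℝ, ∀ n,
      (eLpNorm (fun x => w n x) (ENNReal.ofReal p) (volume.restrict Ω)).toReal ≤ B ∧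
      (eLpNorm (fun x => fnorm (grad (w n) x)) (ENNReal.ofReal p)
        (volume.restrict Ω)).toReal ≤ B)
    (hsmall : Tendsto (fun n => volume {x ∈ Ω | grad (w n) x ≠ 0}) atTop (nhds 0))
    (z : ℕ → EN N → Mat M N)
    (hz : ∀ n x, z n x = Set.indicator {y | grad (w n) y ≠ 0} (fun y => grad u y) x) :
    (∀ n, ∫ x in Ω, (v (grad (w n) x + grad u x) - v (grad u x)) =
        ∫ x in Ω, (v (grad (w n) x + z n x) - v (z n x))) ∧
    Tendsto (fun n => eLpNorm (fun x => fnorm (z n x)) (ENNReal.ofReal p)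
        (volume.restrict Ω)) atTop (nhds 0) ∧
    ∀ φ : EN N → ℝ, ContinuousOn φ (closure Ω) →
      Filter.liminf (fun n => ∫ x in Ω,
          (v (grad (w n) x + grad u x) - v (grad u x)) * φ x) atTop =
        Filter.liminf (fun n => ∫ x in Ω, (v (grad (w n) x) - v 0) * φ x) atTop :=
  stmt12_general p hp Ω hΩo hΩb v hv γ hγc hγ0 hNem u hugrad w hwbd hsmall z hz
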